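/- arXiv:1811.04842 — 6 statements merged into one kernel-verified Lean document; each statement's English description precedes it below -/
import Mathlib

section
/- Let Q be an anchored vector bundle with a dull bracket ⟦·,·⟧ and dual Dorfman connection Δ. Then the Jacobiator of the dull bracket satisfies Jac_{⟦·,·⟧}(q₁,q₂,q₃) = R_Δ(q₁,q₂)* q₃ for all q₁,q₂,q₃ ∈ Γ(Q), where R_Δ(q₁,q₂)τ = Δ_{q₁}Δ_{q₂}τ − Δ_{q₂}Δ_{q₁}τ − Δ_{⟦q₁,q₂⟧}τ is the curvature of Δ and R_Δ(q₁,q₂)* denotes its dual endomorphism of Q. -/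
/-!
Pairing with `τ` and applying the duality formula twice expresses `⟨⟦q₁,⟦q₂,q₃⟧⟧, τ⟩` through
the anchor and `Δ`. The mixed terms `ρ(q₁)⟨q₃, Δ_{q₂}τ⟩ + ρ(q₂)⟨q₃, Δ_{q₁}τ⟩` are symmetric in
`q₁, q₂`, so the Leibniz defect `⟦q₁,⟦q₂,q₃⟧⟧ - ⟦q₂,⟦q₁,q₃⟧⟧` pairs to
`[ρ q₁, ρ q₂]⟨q₃,τ⟩ - ⟨q₃, [Δ_{q₁}, Δ_{q₂}]τ⟩`. By skew-symmetry the Jacobiator is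
`⟦⟦q₁,q₂⟧,q₃⟧` minus this defect, and compatibility with the anchor cancels the remaining
derivative of `⟨q₃,τ⟩`.
-/

namespace DullBracket

variable {k A Q Qd : Type*} [CommRing k] [CommRing A] [Algebra k A]
  [AddCommGroup Q] [Module k Q] [Module A Q]
  [AddCommGroup Qd] [Module k Qd] [Module A Qd]

def jacobiator (br : Q →ₗ[k] Q →ₗ[k] Q) (q₁ q₂ q₃ : Q) : Q :=
  br (br q₁ q₂) q₃ + br (br q₂ q₃) q₁ + br (br q₃ q₁) q₂

def curvature (br : Q →ₗ[k] Q →ₗ[k] Q) (Δ : Q →ₗ[k] Qd →ₗ[k] Qd) (q₁ q₂ : Q) (τ : Qd) : Qd :=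
  Δ q₁ (Δ q₂ τ) - Δ q₂ (Δ q₁ τ) - Δ (br q₁ q₂) τ

def IsDualDorfman (ρ : Q →ₗ[A] Derivation k A A) (pair : Q →ₗ[A] Qd →ₗ[A] A)
    (br : Q →ₗ[k] Q →ₗ[k] Q) (Δ : Q →ₗ[k] Qd →ₗ[k] Qd) : Prop :=
  ∀ q q' τ, ρ q (pair q' τ) = pair (br q q') τ + pair q' (Δ q τ)

theorem jacobiator_eq_of_skew {br : Q →ₗ[k] Q →ₗ[k] Q} (hskew : ∀ q₁ q₂, br q₁ q₂ = -br q₂ q₁)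
    (q₁ q₂ q₃ : Q) :
    jacobiator br q₁ q₂ q₃ = br (br q₁ q₂) q₃ - (br q₁ (br q₂ q₃) - br q₂ (br q₁ q₃)) := by
  rw [jacobiator, hskew (br q₂ q₃), hskew (br q₃ q₁), hskew q₃ q₁, map_neg]
  abel

section IsDualDorfman

variable {ρ : Q →ₗ[A] Derivation k A A} {pair : Q →ₗ[A] Qd →ₗ[A] A}
  {br : Q →ₗ[k] Q →ₗ[k] Q} {Δ : Q →ₗ[k] Qd →ₗ[k] Qd}

theorem IsDualDorfman.pair_br (h : IsDualDorfman ρ pair br Δ) (q q' : Q) (τ : Qd) :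
    pair (br q q') τ = ρ q (pair q' τ) - pair q' (Δ q τ) :=
  eq_sub_of_add_eq (h q q' τ).symm

theorem IsDualDorfman.pair_br_br (h : IsDualDorfman ρ pair br Δ) (q₁ q₂ q₃ : Q) (τ : Qd) :
    pair (br q₁ (br q₂ q₃)) τ = ρ q₁ (ρ q₂ (pair q₃ τ)) - ρ q₁ (pair q₃ (Δ q₂ τ))
      - ρ q₂ (pair q₃ (Δ q₁ τ)) + pair q₃ (Δ q₂ (Δ q₁ τ)) := by
  simp only [h.pair_br, map_sub]
  ring

theorem IsDualDorfman.pair_leibnizDefect (h : IsDualDorfman ρ pair br Δ) (q₁ q₂ q₃ : Q)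
    (τ : Qd) :
    pair (br q₁ (br q₂ q₃) - br q₂ (br q₁ q₃)) τ
      = ⁅ρ q₁, ρ q₂⁆ (pair q₃ τ) - pair q₃ (Δ q₁ (Δ q₂ τ) - Δ q₂ (Δ q₁ τ)) := by
  rw [map_sub, LinearMap.sub_apply, h.pair_br_br, h.pair_br_br, Derivation.commutator_apply,
    map_sub]
  ring

theorem IsDualDorfman.pair_jacobiator (h : IsDualDorfman ρ pair br Δ)
    (hskew : ∀ q₁ q₂, br q₁ q₂ = -br q₂ q₁) (hanchor : ∀ q₁ q₂, ρ (br q₁ q₂) = ⁅ρ q₁, ρ q₂⁆)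
    (q₁ q₂ q₃ : Q) (τ : Qd) :
    pair (jacobiator br q₁ q₂ q₃) τ = pair q₃ (curvature br Δ q₁ q₂ τ) := by
  rw [jacobiator_eq_of_skew hskew, map_sub, LinearMap.sub_apply, h.pair_leibnizDefect,
    h.pair_br, hanchor, curvature]
  simp only [map_sub]
  ring

end IsDualDorfman

end DullBracket

theorem jacobiator_eq_dual_curvature_general
    (A : Type) [CommRing A] [Algebra ℝ A]
    (Q Qd : Type)
    [AddCommGroup Q] [Module ℝ Q] [Module A Q]
    [AddCommGroup Qd] [Module ℝ Qd] [Module A Qd]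
    (ρ : Q →ₗ[A] Derivation ℝ A A)
    (pair : Q →ₗ[A] Qd →ₗ[A] A)
    (br : Q →ₗ[ℝ] Q →ₗ[ℝ] Q)
    (hskew : ∀ q₁ q₂ : Q, br q₁ q₂ = - br q₂ q₁)
    (hanchor : ∀ q₁ q₂ : Q, ρ (br q₁ q₂) = ⁅ρ q₁, ρ q₂⁆)
    (Δ : Q →ₗ[ℝ] Qd →ₗ[ℝ] Qd)
    (hdual : ∀ (q q' : Q) (τ : Qd),
      ρ q (pair q' τ) = pair (br q q') τ + pair q' (Δ q τ)) :
    ∀ (q₁ q₂ q₃ : Q) (τ : Qd),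
      pair (br (br q₁ q₂) q₃ + br (br q₂ q₃) q₁ + br (br q₃ q₁) q₂) τ
        = pair q₃ (Δ q₁ (Δ q₂ τ) - Δ q₂ (Δ q₁ τ) - Δ (br q₁ q₂) τ) :=
  DullBracket.IsDualDorfman.pair_jacobiator hdual hskew hanchor

/-- The Jacobiator of a dull bracket equals the dual of the
curvature of the dual Dorfman connection:
`Jac(q₁,q₂,q₃) = R_Δ(q₁,q₂)^* q₃`, expressed via the duality pairing as
`⟨Jac(q₁,q₂,q₃), τ⟩ = ⟨q₃, R_Δ(q₁,q₂) τ⟩` for all `τ ∈ Γ(Q*)`. -/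
theorem jacobiator_eq_dual_curvature
    (A : Type) [CommRing A] [Algebra ℝ A]
    (Q Qd : Type)
    [AddCommGroup Q] [Module ℝ Q] [Module A Q] [IsScalarTower ℝ A Q]
    [AddCommGroup Qd] [Module ℝ Qd] [Module A Qd] [IsScalarTower ℝ A Qd]
    (ρ : Q →ₗ[A] Derivation ℝ A A)
    (pair : Q →ₗ[A] Qd →ₗ[A] A)
    (hndQd : ∀ τ : Qd, (∀ q : Q, pair q τ = 0) → τ = 0)
    (hndQ : ∀ q : Q, (∀ τ : Qd, pair q τ = 0) → q = 0)
    (br : Q →ₗ[ℝ] Q →ₗ[ℝ] Q)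
    (hskew : ∀ q₁ q₂ : Q, br q₁ q₂ = - br q₂ q₁)
    (hanchor : ∀ q₁ q₂ : Q, ρ (br q₁ q₂) = ⁅ρ q₁, ρ q₂⁆)
    (hleib : ∀ (q₁ q₂ : Q) (f : A), br q₁ (f • q₂) = ρ q₁ f • q₂ + f • br q₁ q₂)
    (Δ : Q →ₗ[ℝ] Qd →ₗ[ℝ] Qd)
    (hdual : ∀ (q q' : Q) (τ : Qd),
      ρ q (pair q' τ) = pair (br q q') τ + pair q' (Δ q τ)) :
    ∀ (q₁ q₂ q₃ : Q) (τ : Qd),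
      pair (br (br q₁ q₂) q₃ + br (br q₂ q₃) q₁ + br (br q₃ q₁) q₂) τ
        = pair q₃ (Δ q₁ (Δ q₂ τ) - Δ q₂ (Δ q₁ τ) - Δ (br q₁ q₂) τ) :=
  jacobiator_eq_dual_curvature_general A Q Qd ρ pair br hskew hanchor Δ hdual
end

section
/- Let (𝖤 → M, ρ, ⟨·,·⟩, ⟦·,·⟧) satisfy the degenerate Courant algebroid axioms (CA1), (CA2), (CA3) with a nondegenerate pairing. Then axiom (CA5) holds: ⟦e₁, f e₂⟧ = f⟦e₁,e₂⟧ + (ρ(e₁)f) e₂ for all e₁, e₂ ∈ Γ(𝖤), f ∈ C^∞(M). -/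
/-! Pair both sides with an arbitrary `e₃`. Expanding `ρ(e₁)(f⟨e₂,e₃⟩)` once by (CA2) and once by
the Leibniz rule for the derivation `ρ(e₁)`, and subtracting `f` times (CA2) for `e₁, e₂, e₃`,
gives `⟨⟦e₁, f e₂⟧, e₃⟩ = ⟨f⟦e₁,e₂⟧ + (ρ(e₁)f) e₂, e₃⟩`; nondegeneracy removes `e₃`. -/

section

variable {A E : Type} [CommRing A] [Algebra ℝ A] [AddCommGroup E] [Module ℝ E] [Module A E]
  {ρ : E →ₗ[A] Derivation ℝ A A} {pr : E →ₗ[A] E →ₗ[A] A} {bb : E →ₗ[ℝ] E →ₗ[ℝ] E}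

theorem pairing_bracket_smul_right
    (CA2 : ∀ e₁ e₂ e₃ : E, ρ e₁ (pr e₂ e₃) = pr (bb e₁ e₂) e₃ + pr e₂ (bb e₁ e₃))
    (e₁ e₂ e₃ : E) (f : A) :
    pr (bb e₁ (f • e₂)) e₃ = pr (f • bb e₁ e₂ + ρ e₁ f • e₂) e₃ := by
  have hfe₂ := CA2 e₁ (f • e₂) e₃
  have he₂ := CA2 e₁ e₂ e₃
  simp only [map_smul, LinearMap.smul_apply, smul_eq_mul, Derivation.leibniz, map_add,
    LinearMap.add_apply] at hfe₂ ⊢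
  linear_combination f * he₂ - hfe₂

end

theorem CA5_follows_from_CA1_CA2_CA3_general
    (A : Type) [CommRing A] [Algebra ℝ A]
    (E : Type)
    [AddCommGroup E] [Module ℝ E] [Module A E]
    (ρ : E →ₗ[A] Derivation ℝ A A)
    (pr : E →ₗ[A] E →ₗ[A] A)
    (hnd : ∀ e : E, (∀ e' : E, pr e e' = 0) → e = 0)
    (bb : E →ₗ[ℝ] E →ₗ[ℝ] E)
    (CA2 : ∀ e₁ e₂ e₃ : E,
      ρ e₁ (pr e₂ e₃) = pr (bb e₁ e₂) e₃ + pr e₂ (bb e₁ e₃)) :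
    ∀ (e₁ e₂ : E) (f : A), bb e₁ (f • e₂) = f • bb e₁ e₂ + ρ e₁ f • e₂ := by
  intro e₁ e₂ f
  have pr_injective : Function.Injective pr :=
    LinearMap.ker_eq_bot.mp (LinearMap.separatingLeft_iff_ker_eq_bot.mp hnd)
  exact pr_injective (LinearMap.ext (pairing_bracket_smul_right CA2 e₁ e₂ · f))

/-- Uchino. If `(𝖤 → M, ρ, ⟨·,·⟩, ⟦·,·⟧)` satisfies the Courant
algebroid axioms (CA1), (CA2), (CA3) with a *nondegenerate* pairing, then axiom
(CA5) holds: `⟦e₁, f e₂⟧ = f ⟦e₁,e₂⟧ + (ρ(e₁) f) e₂`. -/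
theorem CA5_follows_from_CA1_CA2_CA3
    (A : Type) [CommRing A] [Algebra ℝ A]
    (E : Type)
    [AddCommGroup E] [Module ℝ E] [Module A E] [IsScalarTower ℝ A E]
    (ρ : E →ₗ[A] Derivation ℝ A A)
    (pr : E →ₗ[A] E →ₗ[A] A)
    (hsymm : ∀ e₁ e₂ : E, pr e₁ e₂ = pr e₂ e₁)
    (hnd : ∀ e : E, (∀ e' : E, pr e e' = 0) → e = 0)
    (Dm : A → E)
    (hDm : ∀ (f : A) (e : E), pr (Dm f) e = ρ e f)
    (bb : E →ₗ[ℝ] E →ₗ[ℝ] E)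
    (CA1 : ∀ e₁ e₂ e₃ : E,
      bb e₁ (bb e₂ e₃) = bb (bb e₁ e₂) e₃ + bb e₂ (bb e₁ e₃))
    (CA2 : ∀ e₁ e₂ e₃ : E,
      ρ e₁ (pr e₂ e₃) = pr (bb e₁ e₂) e₃ + pr e₂ (bb e₁ e₃))
    (CA3 : ∀ e₁ e₂ : E, bb e₁ e₂ + bb e₂ e₁ = Dm (pr e₁ e₂)) :
    ∀ (e₁ e₂ : E) (f : A), bb e₁ (f • e₂) = f • bb e₁ e₂ + ρ e₁ f • e₂ :=
  CA5_follows_from_CA1_CA2_CA3_general A E ρ pr hnd bb CA2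
end

section
/- Given a matched pair of a self-dual 2-representation of a Lie algebroid B on ∂_Q : Q* → Q with a split Lie 2-algebroid, assuming ρ_Q ∘ ∂_Q = ρ_B ∘ ∂_B, condition (M1), namely ∂_Q(Δ_q τ) = ∇_{∂_B τ} q + ⟦q, ∂_Q τ⟧ + ∂_B*⟨τ, ∇_· q⟩ for all q,τ, is equivalent to the condition (Δ_{∂_Q τ₁}τ₂ − ∇*_{∂_B τ₂}τ₁) + (Δ_{∂_Q τ₂}τ₁ − ∇*_{∂_B τ₁}τ₂) = ρ_Q* d⟨τ₁, ∂_Q τ₂⟩ for all τ₁, τ₂ ∈ Γ(Q*). -/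
/-!
Pair the defect of the second condition at `(τ₁, τ₂)` with an arbitrary `q : Q`. Expanding
`Δ` through the dual bracket and `∇^*` through the dual connection, the anchor condition
`ρ_Q ∘ ∂_Q = ρ_B ∘ ∂_B` cancels all derivative terms except `ρ_Q(q)⟨∂_Q τ₂, τ₁⟩`; by
self-duality that term together with `⟨⟦q, ∂_Q τ₁⟧, τ₂⟩` is exactly `⟨∂_Q(Δ_q τ₂), τ₁⟩`.
So the paired defect equals the defect of (M1) at `(q, τ₂, τ₁)`, and nondegeneracy of the
pairing in the `Q^*` slot gives the equivalence.
-/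

theorem eq_of_forall_pair_eq {A Q Qd : Type} [CommRing A] [AddCommGroup Q] [Module A Q]
    [AddCommGroup Qd] [Module A Qd] {pairQ : Q →ₗ[A] Qd →ₗ[A] A}
    (hndQd : ∀ τ : Qd, (∀ q : Q, pairQ q τ = 0) → τ = 0)
    {τ τ' : Qd} (h : ∀ q, pairQ q τ = pairQ q τ') : τ = τ' :=
  sub_eq_zero.mp <| hndQd _ fun q => by rw [map_sub, h, sub_self]

section MatchedPair

variable {A : Type} [CommRing A] [Algebra ℝ A] {Q Qd B : Type}
  [AddCommGroup Q] [Module ℝ Q] [Module A Q]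
  [AddCommGroup Qd] [Module ℝ Qd] [Module A Qd]
  [AddCommGroup B] [Module ℝ B] [Module A B]
  {ρQ : Q →ₗ[A] Derivation ℝ A A} {ρB : B →ₗ[A] Derivation ℝ A A}
  {pairQ : Q →ₗ[A] Qd →ₗ[A] A} {dQ : Qd →ₗ[A] Q} {dB : Qd →ₗ[A] B}
  {br : Q →ₗ[ℝ] Q →ₗ[ℝ] Q} {Δ : Q →ₗ[ℝ] Qd →ₗ[ℝ] Qd}
  {conQ : B →ₗ[ℝ] Q →ₗ[ℝ] Q} {conQs : B →ₗ[ℝ] Qd →ₗ[ℝ] Qd}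

theorem pair_dorfman_eq (hskew : ∀ q₁ q₂ : Q, br q₁ q₂ = - br q₂ q₁)
    (hdual : ∀ (q q' : Q) (τ : Qd),
      ρQ q (pairQ q' τ) = pairQ (br q q') τ + pairQ q' (Δ q τ))
    (q q' : Q) (τ : Qd) :
    pairQ q' (Δ q τ) = ρQ q (pairQ q' τ) + pairQ (br q' q) τ := by
  rw [hdual, hskew q, map_neg, LinearMap.neg_apply]
  ring

theorem pair_dQ_dorfman_eq (hself : ∀ τ τ' : Qd, pairQ (dQ τ) τ' = pairQ (dQ τ') τ)
    (hdual : ∀ (q q' : Q) (τ : Qd),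
      ρQ q (pairQ q' τ) = pairQ (br q q') τ + pairQ q' (Δ q τ))
    (q : Q) (τ τ' : Qd) :
    pairQ (dQ (Δ q τ)) τ' = ρQ q (pairQ (dQ τ') τ) - pairQ (br q (dQ τ')) τ := by
  rw [hself, hdual]
  ring

theorem pair_dualCon_eq
    (hcondual : ∀ (b : B) (q : Q) (τ : Qd),
      ρB b (pairQ q τ) = pairQ (conQ b q) τ + pairQ q (conQs b τ))
    (b : B) (q : Q) (τ : Qd) :
    pairQ q (conQs b τ) = ρB b (pairQ q τ) - pairQ (conQ b q) τ := by
  rw [hcondual]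
  ring

theorem pair_almostC_defect_eq_M1_defect
    (hself : ∀ τ τ' : Qd, pairQ (dQ τ) τ' = pairQ (dQ τ') τ)
    (hanch : ∀ τ : Qd, ρQ (dQ τ) = ρB (dB τ))
    (hskew : ∀ q₁ q₂ : Q, br q₁ q₂ = - br q₂ q₁)
    (hdual : ∀ (q q' : Q) (τ : Qd),
      ρQ q (pairQ q' τ) = pairQ (br q q') τ + pairQ q' (Δ q τ))
    {DmQ : A → Qd} (hDmQ : ∀ (q : Q) (f : A), pairQ q (DmQ f) = ρQ q f)
    (hcondual : ∀ (b : B) (q : Q) (τ : Qd),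
      ρB b (pairQ q τ) = pairQ (conQ b q) τ + pairQ q (conQs b τ))
    (q : Q) (τ₁ τ₂ : Qd) :
    pairQ q ((Δ (dQ τ₁) τ₂ - conQs (dB τ₂) τ₁) + (Δ (dQ τ₂) τ₁ - conQs (dB τ₁) τ₂))
        - pairQ q (DmQ (pairQ (dQ τ₂) τ₁))
      = (pairQ (conQ (dB τ₂) q) τ₁ + pairQ (br q (dQ τ₂)) τ₁
          + pairQ (conQ (dB τ₁) q) τ₂)
        - pairQ (dQ (Δ q τ₂)) τ₁ := by
  simp only [map_add, map_sub, pair_dorfman_eq hskew hdual, pair_dualCon_eq hcondual,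
    pair_dQ_dorfman_eq hself hdual, hDmQ, hanch, hself τ₂ τ₁]
  ring

end MatchedPair

theorem M1_iff_almost_C_general
    (A : Type) [CommRing A] [Algebra ℝ A]
    (Q Qd B : Type)
    [AddCommGroup Q] [Module ℝ Q] [Module A Q]
    [AddCommGroup Qd] [Module ℝ Qd] [Module A Qd]
    [AddCommGroup B] [Module ℝ B] [Module A B]
    (ρQ : Q →ₗ[A] Derivation ℝ A A)
    (ρB : B →ₗ[A] Derivation ℝ A A)
    (pairQ : Q →ₗ[A] Qd →ₗ[A] A)
    (hndQd : ∀ τ : Qd, (∀ q : Q, pairQ q τ = 0) → τ = 0)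
    (dQ : Qd →ₗ[A] Q) (dB : Qd →ₗ[A] B)
    -- self-duality ∂_Q^* = ∂_Q
    (hself : ∀ τ τ' : Qd, pairQ (dQ τ) τ' = pairQ (dQ τ') τ)
    -- assumption: the anchors agree
    (hanch : ∀ τ : Qd, ρQ (dQ τ) = ρB (dB τ))
    -- dull bracket and dual Dorfman connection
    (br : Q →ₗ[ℝ] Q →ₗ[ℝ] Q)
    (hskew : ∀ q₁ q₂ : Q, br q₁ q₂ = - br q₂ q₁)
    (Δ : Q →ₗ[ℝ] Qd →ₗ[ℝ] Qd)
    (hdual : ∀ (q q' : Q) (τ : Qd),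
      ρQ q (pairQ q' τ) = pairQ (br q q') τ + pairQ q' (Δ q τ))
    (DmQ : A → Qd)
    (hDmQ : ∀ (q : Q) (f : A), pairQ q (DmQ f) = ρQ q f)
    -- B-connection ∇ on Q and dual connection ∇^* on Q^*
    (conQ : B →ₗ[ℝ] Q →ₗ[ℝ] Q) (conQs : B →ₗ[ℝ] Qd →ₗ[ℝ] Qd)
    (hcondual : ∀ (b : B) (q : Q) (τ : Qd),
      ρB b (pairQ q τ) = pairQ (conQ b q) τ + pairQ q (conQs b τ)) :
    -- (M1), weak form
    (∀ (q : Q) (τ τ' : Qd),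
      pairQ (dQ (Δ q τ)) τ'
        = pairQ (conQ (dB τ) q) τ' + pairQ (br q (dQ τ)) τ'
          + pairQ (conQ (dB τ') q) τ)
    ↔
    (∀ τ₁ τ₂ : Qd,
      (Δ (dQ τ₁) τ₂ - conQs (dB τ₂) τ₁) + (Δ (dQ τ₂) τ₁ - conQs (dB τ₁) τ₂)
        = DmQ (pairQ (dQ τ₂) τ₁)) := by
  have defect := pair_almostC_defect_eq_M1_defect hself hanch hskew hdual hDmQ hcondual
  constructor
  · intro hM1 τ₁ τ₂
    refine eq_of_forall_pair_eq hndQd fun q => ?_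
    have h := defect q τ₁ τ₂
    rwa [← hM1, sub_self, sub_eq_zero] at h
  · intro hC q τ τ'
    have h := defect q τ' τ
    rw [hC, sub_self, eq_comm, sub_eq_zero] at h
    exact h.symm

/-- Assuming `ρ_Q ∘ ∂_Q = ρ_B ∘ ∂_B`, the matched pair
condition (M1), `∂_Q(Δ_q τ) = ∇_{∂_B τ} q + ⟦q, ∂_Q τ⟧ + ∂_B^*⟨τ, ∇_· q⟩`
(stated in weak, paired form), is equivalent to
`(Δ_{∂_Q τ₁}τ₂ − ∇^*_{∂_B τ₂}τ₁) + (Δ_{∂_Q τ₂}τ₁ − ∇^*_{∂_B τ₁}τ₂)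
   = ρ_Q^* d⟨τ₁, ∂_Q τ₂⟩` for all `τ₁, τ₂ ∈ Γ(Q*)`. -/
theorem M1_iff_almost_C
    (A : Type) [CommRing A] [Algebra ℝ A]
    (Q Qd B : Type)
    [AddCommGroup Q] [Module ℝ Q] [Module A Q] [IsScalarTower ℝ A Q]
    [AddCommGroup Qd] [Module ℝ Qd] [Module A Qd] [IsScalarTower ℝ A Qd]
    [AddCommGroup B] [Module ℝ B] [Module A B] [IsScalarTower ℝ A B]
    (ρQ : Q →ₗ[A] Derivation ℝ A A)
    (ρB : B →ₗ[A] Derivation ℝ A A)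
    (pairQ : Q →ₗ[A] Qd →ₗ[A] A)
    (hndQ : ∀ q : Q, (∀ τ : Qd, pairQ q τ = 0) → q = 0)
    (hndQd : ∀ τ : Qd, (∀ q : Q, pairQ q τ = 0) → τ = 0)
    (dQ : Qd →ₗ[A] Q) (dB : Qd →ₗ[A] B)
    -- self-duality ∂_Q^* = ∂_Q
    (hself : ∀ τ τ' : Qd, pairQ (dQ τ) τ' = pairQ (dQ τ') τ)
    -- assumption: the anchors agree
    (hanch : ∀ τ : Qd, ρQ (dQ τ) = ρB (dB τ))
    -- dull bracket and dual Dorfman connection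
    (br : Q →ₗ[ℝ] Q →ₗ[ℝ] Q)
    (hskew : ∀ q₁ q₂ : Q, br q₁ q₂ = - br q₂ q₁)
    (Δ : Q →ₗ[ℝ] Qd →ₗ[ℝ] Qd)
    (hdual : ∀ (q q' : Q) (τ : Qd),
      ρQ q (pairQ q' τ) = pairQ (br q q') τ + pairQ q' (Δ q τ))
    (DmQ : A → Qd)
    (hDmQ : ∀ (q : Q) (f : A), pairQ q (DmQ f) = ρQ q f)
    -- B-connection ∇ on Q and dual connection ∇^* on Q^*
    (conQ : B →ₗ[ℝ] Q →ₗ[ℝ] Q) (conQs : B →ₗ[ℝ] Qd →ₗ[ℝ] Qd)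
    (hcondual : ∀ (b : B) (q : Q) (τ : Qd),
      ρB b (pairQ q τ) = pairQ (conQ b q) τ + pairQ q (conQs b τ))
    (hcomm : ∀ (b : B) (τ : Qd), conQ b (dQ τ) = dQ (conQs b τ)) :
    -- (M1), weak form
    (∀ (q : Q) (τ τ' : Qd),
      pairQ (dQ (Δ q τ)) τ'
        = pairQ (conQ (dB τ) q) τ' + pairQ (br q (dQ τ)) τ'
          + pairQ (conQ (dB τ') q) τ)
    ↔
    (∀ τ₁ τ₂ : Qd,
      (Δ (dQ τ₁) τ₂ - conQs (dB τ₂) τ₁) + (Δ (dQ τ₂) τ₁ - conQs (dB τ₁) τ₂)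
        = DmQ (pairQ (dQ τ₂) τ₁)) :=
  M1_iff_almost_C_general A Q Qd B ρQ ρB pairQ hndQd dQ dB hself hanch br hskew Δ hdual DmQ hDmQ
    conQ conQs hcondual
end

section
/- Under the matched pair conditions of an LA-Courant algebroid, the core bracket ⟦τ₁,τ₂⟧_{Q*} = Δ_{∂_Q τ₁}τ₂ − ∇*_{∂_B τ₂}τ₁ satisfies ∂_Q⟦τ₁,τ₂⟧_{Q*} = ⟦∂_Q τ₁, ∂_Q τ₂⟧_Δ + ∂_B*⟨τ₂, ∇_·(∂_Q τ₁)⟩ for all τ₁, τ₂ ∈ Γ(Q*), where ⟦·,·⟧_Δ is the dull bracket on Γ(Q) and ⟨τ₂, ∇_·(∂_Q τ₁)⟩ ∈ Γ(B*) is given by b ↦ ⟨τ₂, ∇_b ∂_Q τ₁⟩. -/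
/-- Weak form: both sides are paired with an arbitrary `τ'`, using
`⟨∂_B^* β, τ'⟩ = ⟨β, ∂_B τ'⟩`. -/
theorem dQ_of_core_bracket
    (A : Type) [CommRing A] [Algebra ℝ A]
    (Q Qd B : Type)
    [AddCommGroup Q] [Module ℝ Q] [Module A Q] [IsScalarTower ℝ A Q]
    [AddCommGroup Qd] [Module ℝ Qd] [Module A Qd] [IsScalarTower ℝ A Qd]
    [AddCommGroup B] [Module ℝ B] [Module A B] [IsScalarTower ℝ A B]
    (pairQ : Q →ₗ[A] Qd →ₗ[A] A)
    (dQ : Qd →ₗ[A] Q) (dB : Qd →ₗ[A] B)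
    -- dull bracket ⟦·,·⟧_Δ and Dorfman connection Δ
    (br : Q →ₗ[ℝ] Q →ₗ[ℝ] Q)
    (Δ : Q →ₗ[ℝ] Qd →ₗ[ℝ] Qd)
    -- B-connections ∇ on Q and ∇^* on Q^*, with ∇ ∘ ∂_Q = ∂_Q ∘ ∇^*
    (conQ : B →ₗ[ℝ] Q →ₗ[ℝ] Q) (conQs : B →ₗ[ℝ] Qd →ₗ[ℝ] Qd)
    (hcomm : ∀ (b : B) (τ : Qd), conQ b (dQ τ) = dQ (conQs b τ))
    -- (M1), weak form
    (hM1 : ∀ (q : Q) (τ τ' : Qd),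
      pairQ (dQ (Δ q τ)) τ'
        = pairQ (conQ (dB τ) q) τ' + pairQ (br q (dQ τ)) τ'
          + pairQ (conQ (dB τ') q) τ) :
    ∀ τ₁ τ₂ τ' : Qd,
      pairQ (dQ (Δ (dQ τ₁) τ₂ - conQs (dB τ₂) τ₁)) τ'
        = pairQ (br (dQ τ₁) (dQ τ₂)) τ' + pairQ (conQ (dB τ') (dQ τ₁)) τ₂ := by
  intro τ₁ τ₂ τ'
  rw [map_sub, map_sub, LinearMap.sub_apply, hM1, ← hcomm]
  abel
end

section
/- Let (𝔼, B, Q, M) be an LA-Courant algebroid with matched pair data as usual. Then the core Q* with anchor ρ_{Q*} = ρ_Q ∘ ∂_Q, map 𝒟 = ρ_Q* ∘ d, pairing ⟨τ₁,τ₂⟩_{Q*} = ⟨τ₁, ∂_Q τ₂⟩, and bracket ⟦τ₁,τ₂⟧_{Q*} = Δ_{∂_Q τ₁}τ₂ − ∇*_{∂_B τ₂}τ₁ satisfies the degenerate Courant algebroid axiom (CA2): ρ_{Q*}(τ₁)⟨τ₂,τ₃⟩_{Q*} = ⟨⟦τ₁,τ₂⟧_{Q*}, τ₃⟩_{Q*}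 + ⟨τ₂, ⟦τ₁,τ₃⟧_{Q*}⟩_{Q*} for all τ₁,τ₂,τ₃ ∈ Γ(Q*). -/
theorem core_CA2_general
    (A : Type) [CommRing A] [Algebra ℝ A]
    (Q Qd B : Type)
    [AddCommGroup Q] [Module ℝ Q] [Module A Q]
    [AddCommGroup Qd] [Module ℝ Qd] [Module A Qd]
    [AddCommGroup B] [Module ℝ B] [Module A B]
    (ρQ : Q →ₗ[A] Derivation ℝ A A)
    (pairQ : Q →ₗ[A] Qd →ₗ[A] A)
    (dQ : Qd →ₗ[A] Q) (dB : Qd →ₗ[A] B)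
    -- self-duality ∂_Q^* = ∂_Q
    (hself : ∀ τ τ' : Qd, pairQ (dQ τ) τ' = pairQ (dQ τ') τ)
    -- dull bracket and dual Dorfman connection
    (br : Q →ₗ[ℝ] Q →ₗ[ℝ] Q)
    (Δ : Q →ₗ[ℝ] Qd →ₗ[ℝ] Qd)
    (hdual : ∀ (q q' : Q) (τ : Qd),
      ρQ q (pairQ q' τ) = pairQ (br q q') τ + pairQ q' (Δ q τ))
    -- B-connections ∇ on Q, ∇^* on Q^*, dual to each other and with
    -- ∇ ∘ ∂_Q = ∂_Q ∘ ∇^*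
    (conQ : B →ₗ[ℝ] Q →ₗ[ℝ] Q) (conQs : B →ₗ[ℝ] Qd →ₗ[ℝ] Qd)
    (hcomm : ∀ (b : B) (τ : Qd), conQ b (dQ τ) = dQ (conQs b τ))
    -- the identity ∂_Q⟦τ₁,τ₂⟧_{Q*} = ⟦∂_Qτ₁,∂_Qτ₂⟧_Δ + ∂_B^*⟨τ₂, ∇_·∂_Qτ₁⟩
    -- (weak form), consequence of (M1)
    (h13 : ∀ τ₁ τ₂ τ' : Qd,
      pairQ (dQ (Δ (dQ τ₁) τ₂ - conQs (dB τ₂) τ₁)) τ'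
        = pairQ (br (dQ τ₁) (dQ τ₂)) τ'
          + pairQ (conQ (dB τ') (dQ τ₁)) τ₂) :
    ∀ τ₁ τ₂ τ₃ : Qd,
      ρQ (dQ τ₁) (pairQ (dQ τ₃) τ₂)
        = pairQ (dQ τ₃) (Δ (dQ τ₁) τ₂ - conQs (dB τ₂) τ₁)
          + pairQ (dQ (Δ (dQ τ₁) τ₃ - conQs (dB τ₃) τ₁)) τ₂ := by
  intro τ₁ τ₂ τ₃
  -- The `∇*`-term of `⟦τ₁,τ₂⟧` cancels the `∇`-term that `h13` produces for `⟦τ₁,τ₃⟧`.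
  have hcancel : pairQ (dQ τ₃) (conQs (dB τ₂) τ₁) = pairQ (conQ (dB τ₂) (dQ τ₁)) τ₃ := by
    rw [hcomm, hself]
  rw [hdual, h13 τ₁ τ₃ τ₂, map_sub, hcancel]
  ring

/-- For an LA-Courant algebroid with matched pair data, the
core `Q*` with anchor `ρ_{Q*} = ρ_Q ∘ ∂_Q`, pairing
`⟨τ₁,τ₂⟩_{Q*} = ⟨τ₁, ∂_Q τ₂⟩` and bracket
`⟦τ₁,τ₂⟧_{Q*} = Δ_{∂_Q τ₁}τ₂ − ∇^*_{∂_B τ₂}τ₁` satisfies the degenerate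
Courant algebroid axiom (CA2). -/
theorem core_CA2
    (A : Type) [CommRing A] [Algebra ℝ A]
    (Q Qd B : Type)
    [AddCommGroup Q] [Module ℝ Q] [Module A Q] [IsScalarTower ℝ A Q]
    [AddCommGroup Qd] [Module ℝ Qd] [Module A Qd] [IsScalarTower ℝ A Qd]
    [AddCommGroup B] [Module ℝ B] [Module A B] [IsScalarTower ℝ A B]
    (ρQ : Q →ₗ[A] Derivation ℝ A A)
    (ρB : B →ₗ[A] Derivation ℝ A A)
    (pairQ : Q →ₗ[A] Qd →ₗ[A] A)
    (dQ : Qd →ₗ[A] Q) (dB : Qd →ₗ[A] B)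
    -- self-duality ∂_Q^* = ∂_Q
    (hself : ∀ τ τ' : Qd, pairQ (dQ τ) τ' = pairQ (dQ τ') τ)
    -- the anchors agree: ρ_Q ∘ ∂_Q = ρ_B ∘ ∂_B
    (hanch : ∀ τ : Qd, ρQ (dQ τ) = ρB (dB τ))
    -- dull bracket and dual Dorfman connection
    (br : Q →ₗ[ℝ] Q →ₗ[ℝ] Q)
    (Δ : Q →ₗ[ℝ] Qd →ₗ[ℝ] Qd)
    (hdual : ∀ (q q' : Q) (τ : Qd),
      ρQ q (pairQ q' τ) = pairQ (br q q') τ + pairQ q' (Δ q τ))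
    -- B-connections ∇ on Q, ∇^* on Q^*, dual to each other and with
    -- ∇ ∘ ∂_Q = ∂_Q ∘ ∇^*
    (conQ : B →ₗ[ℝ] Q →ₗ[ℝ] Q) (conQs : B →ₗ[ℝ] Qd →ₗ[ℝ] Qd)
    (hcondual : ∀ (b : B) (q : Q) (τ : Qd),
      ρB b (pairQ q τ) = pairQ (conQ b q) τ + pairQ q (conQs b τ))
    (hcomm : ∀ (b : B) (τ : Qd), conQ b (dQ τ) = dQ (conQs b τ))
    -- the identity ∂_Q⟦τ₁,τ₂⟧_{Q*} = ⟦∂_Qτ₁,∂_Qτ₂⟧_Δ + ∂_B^*⟨τ₂, ∇_·∂_Qτ₁⟩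
    -- (weak form), consequence of (M1)
    (h13 : ∀ τ₁ τ₂ τ' : Qd,
      pairQ (dQ (Δ (dQ τ₁) τ₂ - conQs (dB τ₂) τ₁)) τ'
        = pairQ (br (dQ τ₁) (dQ τ₂)) τ'
          + pairQ (conQ (dB τ') (dQ τ₁)) τ₂) :
    ∀ τ₁ τ₂ τ₃ : Qd,
      ρQ (dQ τ₁) (pairQ (dQ τ₃) τ₂)
        = pairQ (dQ τ₃) (Δ (dQ τ₁) τ₂ - conQs (dB τ₂) τ₁)
          + pairQ (dQ (Δ (dQ τ₁) τ₃ - conQs (dB τ₃) τ₁)) τ₂ :=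
  core_CA2_general A Q Qd B ρQ pairQ dQ dB hself br Δ hdual conQ conQs hcomm h13
end

section
/- Let (𝔼, B, Q, M) be an LA-Courant algebroid with matched pair data. The core bracket ⟦τ₁,τ₂⟧_{Q*} = Δ_{∂_Q τ₁}τ₂ − ∇*_{∂_B τ₂}τ₁ satisfies the symmetrised identity (CA3): ⟦τ₁,τ₂⟧_{Q*} + ⟦τ₂,τ₁⟧_{Q*} = ρ_Q* d⟨τ₁, ∂_Q τ₂⟩ for all τ₁,τ₂ ∈ Γ(Q*). -/
/-!
Pair both sides with an arbitrary `q : Q` and use that `Q*` is nondegenerately paired with `Q`.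
Since `ρ_Q ∘ ∂_Q = ρ_B ∘ ∂_B`, the anchor terms cancel in `⟨q, Δ_{∂_Q τ}τ' − ∇*_{∂_B τ}τ'⟩`,
leaving `⟨[q, ∂_Q τ], τ'⟩ + ⟨∇_{∂_B τ} q, τ'⟩`. On the other side,
`⟨q, ρ_Q* d⟨∂_Q τ₂, τ₁⟩⟩ = ρ_Q(q)⟨∂_Q τ₂, τ₁⟩` is expanded by the dual Dorfman connection, and the
resulting term `⟨∂_Q τ₂, Δ_q τ₁⟩ = ⟨∂_Q Δ_q τ₁, τ₂⟩` is exactly what (M1) rewrites into the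
remaining three summands.
-/

theorem eq_of_forall_pair_eq_s15 {R M N : Type} [CommRing R] [AddCommGroup M] [Module R M]
    [AddCommGroup N] [Module R N] {p : M →ₗ[R] N →ₗ[R] R}
    (hnd : ∀ n : N, (∀ m : M, p m n = 0) → n = 0)
    {n n' : N} (h : ∀ m : M, p m n = p m n') : n = n' :=
  sub_eq_zero.mp <| hnd _ fun m => by rw [map_sub, h, sub_self]

section MatchedPair

variable {A : Type} [CommRing A] [Algebra ℝ A]
  {Q Qd B : Type}
  [AddCommGroup Q] [Module ℝ Q] [Module A Q]
  [AddCommGroup Qd] [Module ℝ Qd] [Module A Qd]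
  [AddCommGroup B] [Module ℝ B] [Module A B]
  {ρQ : Q →ₗ[A] Derivation ℝ A A} {ρB : B →ₗ[A] Derivation ℝ A A}
  {pairQ : Q →ₗ[A] Qd →ₗ[A] A} {dQ : Qd →ₗ[A] Q} {dB : Qd →ₗ[A] B}
  {br : Q →ₗ[ℝ] Q →ₗ[ℝ] Q} {Δ : Q →ₗ[ℝ] Qd →ₗ[ℝ] Qd}
  {conQ : B →ₗ[ℝ] Q →ₗ[ℝ] Q} {conQs : B →ₗ[ℝ] Qd →ₗ[ℝ] Qd}

theorem pair_dorfman_sub_dualCon_of_anchor_eq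
    (hanch : ∀ τ : Qd, ρQ (dQ τ) = ρB (dB τ))
    (hskew : ∀ q₁ q₂ : Q, br q₁ q₂ = - br q₂ q₁)
    (hdual : ∀ (q q' : Q) (τ : Qd),
      ρQ q (pairQ q' τ) = pairQ (br q q') τ + pairQ q' (Δ q τ))
    (hcondual : ∀ (b : B) (q : Q) (τ : Qd),
      ρB b (pairQ q τ) = pairQ (conQ b q) τ + pairQ q (conQs b τ))
    (q : Q) (τ τ' : Qd) :
    pairQ q (Δ (dQ τ) τ' - conQs (dB τ) τ')
      = pairQ (br q (dQ τ)) τ' + pairQ (conQ (dB τ) q) τ' := by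
  have hΔ := hdual (dQ τ) q τ'
  have hcon := hcondual (dB τ) q τ'
  rw [hanch, hskew, map_neg, LinearMap.neg_apply] at hΔ
  rw [map_sub]
  linear_combination hcon - hΔ

theorem anchor_pair_dQ_eq_of_M1
    (hself : ∀ τ τ' : Qd, pairQ (dQ τ) τ' = pairQ (dQ τ') τ)
    (hdual : ∀ (q q' : Q) (τ : Qd),
      ρQ q (pairQ q' τ) = pairQ (br q q') τ + pairQ q' (Δ q τ))
    (hM1 : ∀ (q : Q) (τ τ' : Qd),
      pairQ (dQ (Δ q τ)) τ'
        = pairQ (conQ (dB τ) q) τ' + pairQ (br q (dQ τ)) τ'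
          + pairQ (conQ (dB τ') q) τ)
    (q : Q) (τ₁ τ₂ : Qd) :
    ρQ q (pairQ (dQ τ₂) τ₁)
      = (pairQ (br q (dQ τ₁)) τ₂ + pairQ (conQ (dB τ₁) q) τ₂)
        + (pairQ (br q (dQ τ₂)) τ₁ + pairQ (conQ (dB τ₂) q) τ₁) := by
  rw [hdual, hself, hM1]
  ring

end MatchedPair

theorem core_CA3_general
    (A : Type) [CommRing A] [Algebra ℝ A]
    (Q Qd B : Type)
    [AddCommGroup Q] [Module ℝ Q] [Module A Q]
    [AddCommGroup Qd] [Module ℝ Qd] [Module A Qd]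
    [AddCommGroup B] [Module ℝ B] [Module A B]
    (ρQ : Q →ₗ[A] Derivation ℝ A A)
    (ρB : B →ₗ[A] Derivation ℝ A A)
    (pairQ : Q →ₗ[A] Qd →ₗ[A] A)
    (hndQd : ∀ τ : Qd, (∀ q : Q, pairQ q τ = 0) → τ = 0)
    (dQ : Qd →ₗ[A] Q) (dB : Qd →ₗ[A] B)
    (hself : ∀ τ τ' : Qd, pairQ (dQ τ) τ' = pairQ (dQ τ') τ)
    (hanch : ∀ τ : Qd, ρQ (dQ τ) = ρB (dB τ))
    (br : Q →ₗ[ℝ] Q →ₗ[ℝ] Q)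
    (hskew : ∀ q₁ q₂ : Q, br q₁ q₂ = - br q₂ q₁)
    (Δ : Q →ₗ[ℝ] Qd →ₗ[ℝ] Qd)
    (hdual : ∀ (q q' : Q) (τ : Qd),
      ρQ q (pairQ q' τ) = pairQ (br q q') τ + pairQ q' (Δ q τ))
    (DmQ : A → Qd)
    (hDmQ : ∀ (q : Q) (f : A), pairQ q (DmQ f) = ρQ q f)
    (conQ : B →ₗ[ℝ] Q →ₗ[ℝ] Q) (conQs : B →ₗ[ℝ] Qd →ₗ[ℝ] Qd)
    (hcondual : ∀ (b : B) (q : Q) (τ : Qd),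
      ρB b (pairQ q τ) = pairQ (conQ b q) τ + pairQ q (conQs b τ))
    -- (M1), weak form
    (hM1 : ∀ (q : Q) (τ τ' : Qd),
      pairQ (dQ (Δ q τ)) τ'
        = pairQ (conQ (dB τ) q) τ' + pairQ (br q (dQ τ)) τ'
          + pairQ (conQ (dB τ') q) τ) :
    ∀ τ₁ τ₂ : Qd,
      (Δ (dQ τ₁) τ₂ - conQs (dB τ₂) τ₁) + (Δ (dQ τ₂) τ₁ - conQs (dB τ₁) τ₂)
        = DmQ (pairQ (dQ τ₂) τ₁) := by
  intro τ₁ τ₂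
  have hsplit : (Δ (dQ τ₁) τ₂ - conQs (dB τ₂) τ₁) + (Δ (dQ τ₂) τ₁ - conQs (dB τ₁) τ₂)
      = (Δ (dQ τ₁) τ₂ - conQs (dB τ₁) τ₂) + (Δ (dQ τ₂) τ₁ - conQs (dB τ₂) τ₁) := by
    abel
  rw [hsplit]
  refine eq_of_forall_pair_eq_s15 hndQd fun q => ?_
  have hpair := pair_dorfman_sub_dualCon_of_anchor_eq hanch hskew hdual hcondual q
  rw [map_add, hpair, hpair, hDmQ, anchor_pair_dQ_eq_of_M1 hself hdual hM1]

/-- For an LA-Courant algebroid with matched pair data, the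
core bracket `⟦τ₁,τ₂⟧_{Q*} = Δ_{∂_Q τ₁}τ₂ − ∇^*_{∂_B τ₂}τ₁` satisfies the
symmetrised identity (CA3):
`⟦τ₁,τ₂⟧_{Q*} + ⟦τ₂,τ₁⟧_{Q*} = ρ_Q^* d⟨τ₁, ∂_Q τ₂⟩`. -/
theorem core_CA3
    (A : Type) [CommRing A] [Algebra ℝ A]
    (Q Qd B : Type)
    [AddCommGroup Q] [Module ℝ Q] [Module A Q] [IsScalarTower ℝ A Q]
    [AddCommGroup Qd] [Module ℝ Qd] [Module A Qd] [IsScalarTower ℝ A Qd]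
    [AddCommGroup B] [Module ℝ B] [Module A B] [IsScalarTower ℝ A B]
    (ρQ : Q →ₗ[A] Derivation ℝ A A)
    (ρB : B →ₗ[A] Derivation ℝ A A)
    (pairQ : Q →ₗ[A] Qd →ₗ[A] A)
    (hndQd : ∀ τ : Qd, (∀ q : Q, pairQ q τ = 0) → τ = 0)
    (dQ : Qd →ₗ[A] Q) (dB : Qd →ₗ[A] B)
    (hself : ∀ τ τ' : Qd, pairQ (dQ τ) τ' = pairQ (dQ τ') τ)
    (hanch : ∀ τ : Qd, ρQ (dQ τ) = ρB (dB τ))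
    (br : Q →ₗ[ℝ] Q →ₗ[ℝ] Q)
    (hskew : ∀ q₁ q₂ : Q, br q₁ q₂ = - br q₂ q₁)
    (Δ : Q →ₗ[ℝ] Qd →ₗ[ℝ] Qd)
    (hdual : ∀ (q q' : Q) (τ : Qd),
      ρQ q (pairQ q' τ) = pairQ (br q q') τ + pairQ q' (Δ q τ))
    (DmQ : A → Qd)
    (hDmQ : ∀ (q : Q) (f : A), pairQ q (DmQ f) = ρQ q f)
    (conQ : B →ₗ[ℝ] Q →ₗ[ℝ] Q) (conQs : B →ₗ[ℝ] Qd →ₗ[ℝ] Qd)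
    (hcondual : ∀ (b : B) (q : Q) (τ : Qd),
      ρB b (pairQ q τ) = pairQ (conQ b q) τ + pairQ q (conQs b τ))
    (hcomm : ∀ (b : B) (τ : Qd), conQ b (dQ τ) = dQ (conQs b τ))
    -- (M1), weak form
    (hM1 : ∀ (q : Q) (τ τ' : Qd),
      pairQ (dQ (Δ q τ)) τ'
        = pairQ (conQ (dB τ) q) τ' + pairQ (br q (dQ τ)) τ'
          + pairQ (conQ (dB τ') q) τ) :
    ∀ τ₁ τ₂ : Qd,
      (Δ (dQ τ₁) τ₂ - conQs (dB τ₂) τ₁) + (Δ (dQ τ₂) τ₁ - conQs (dB τ₁) τ₂)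
        = DmQ (pairQ (dQ τ₂) τ₁) :=
  core_CA3_general A Q Qd B ρQ ρB pairQ hndQd dQ dB hself hanch br hskew Δ hdual DmQ hDmQ conQ conQs
    hcondual hM1
end
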